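/- Every finite Ramsey algebra is a degenerate Ramsey algebra: let L be a first-order language all of whose symbols are function symbols of arity ≥ 1, and let 𝔄 be an L-structure whose underlying set A is finite. If 𝔄 is a Ramsey algebra, then for every a : ℕ → A there exists a reduction b ≤ a such that FR(b) is a singleton. -/

import Mathlib

open Function Set

universe u v w

/-- Terms of a purely functional first-order language whose function symbols
of arity `n` form the type `F n`, with variables indexed by `ℕ`. -/
inductive Tm (F : ℕ → Type u) : Type u
  | var : ℕ → Tm F
  | func : {n : ℕ} → F n → (Fin n → Tm F) → Tm F

namespace Tm

variable {F : ℕ → Type u} {A : Type v} {β : Type w}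

/-- The list of (indices of) variables occurring in a term, from left to right. -/
def varList : Tm F → List ℕ
  | .var i => [i]
  | .func (n := n) _ ts => (List.finRange n).flatMap fun i => (ts i).varList

/-- A term is *orderly* if the indices of the variables occurring in it,
read from left to right, are strictly increasing. -/
def Orderly (t : Tm F) : Prop := t.varList.Chain' (· < ·)

/-- `TermLT s t` iff the index of the last variable of `s` is less than the
index of the first variable of `t`. -/
def TermLT (s t : Tm F) : Prop :=
  ∃ i j, s.varList.getLast? = some i ∧ t.varList.head? = some j ∧ i < j

/-- An infinite sequence of orderly terms is *admissible* iff it is increasing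
with respect to `TermLT`. -/
def Admissible (ts : ℕ → Tm F) : Prop :=
  (∀ i, (ts i).Orderly) ∧ ∀ i, TermLT (ts i) (ts (i + 1))

/-- `s.subst σ` replaces each variable `vᵢ` in `s` by `σ i`. -/
def subst (σ : ℕ → Tm F) : Tm F → Tm F
  | .var i => σ i
  | .func f ts => .func f fun i => (ts i).subst σ

/-- Interpretation of a term in a structure with underlying set `A` whose
interpretation of the function symbols is `I`, under the assignment `a`. -/
def realize (I : ∀ n, F n → (Fin n → A) → A) (a : ℕ → A) : Tm F → A
  | .var i => a i
  | .func (n := n) f ts => I n f fun i => (ts i).realize I a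

end Tm

section General

variable {F : ℕ → Type u} {A : Type v} {β : Type w}

/-- `b` is a reduction of `a` (with respect to the algebra `(A, I)`). -/
def SeqReduction (I : ∀ n, F n → (Fin n → A) → A) (b a : ℕ → A) : Prop :=
  ∃ ts : ℕ → Tm F, Tm.Admissible ts ∧ ∀ i, b i = (ts i).realize I a

/-- The set of finite reductions of `a`. -/
def FR (I : ∀ n, F n → (Fin n → A) → A) (a : ℕ → A) : Set A :=
  { x | ∃ t : Tm F, t.Orderly ∧ x = t.realize I a }

/-- `(A, I)` is a Ramsey algebra. -/
def RamseyAlg (I : ∀ n, F n → (Fin n → A) → A) : Prop :=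
  ∀ (a : ℕ → A) (X : Set A),
    ∃ b, SeqReduction I b a ∧ (FR I b ⊆ X ∨ FR I b ∩ X = ∅)

/-- `(A, I)` is Ramsey below `a`. -/
def RamseyBelow (I : ∀ n, F n → (Fin n → A) → A) (a : ℕ → A) : Prop :=
  ∀ b, SeqReduction I b a → ∀ X : Set A,
    ∃ c, SeqReduction I c b ∧ (FR I c ⊆ X ∨ FR I c ∩ X = ∅)

/-- An increasing tuple `t₁ < t₂ < ⋯ < tₙ` of orderly terms. -/
def OrdTuple {n : ℕ} (t : Fin n → Tm F) : Prop :=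
  (∀ i, (t i).Orderly) ∧ ∀ i j : Fin n, i < j → Tm.TermLT (t i) (t j)

/-- `𝒜` (as a function on orderly terms) is an orderly algebra. -/
def IsOrderlyAlg (𝒜 : Tm F → β) : Prop :=
  ∀ (n : ℕ) (f : F n) (t t' : Fin n → Tm F), OrdTuple t → OrdTuple t' →
    (∀ k, 𝒜 (t k) = 𝒜 (t' k)) → 𝒜 (.func f t) = 𝒜 (.func f t')

/-- The universe of an orderly algebra: its range on orderly terms. -/
def OAUniv (𝒜 : Tm F → β) : Set β := 𝒜 '' { t | t.Orderly }

/-- `ℬ` is a reduction of the orderly algebra `𝒜` (as functions on orderly terms). -/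
def OAReduction (ℬ 𝒜 : Tm F → β) : Prop :=
  ∃ ts : ℕ → Tm F, Tm.Admissible ts ∧ ∀ s : Tm F, s.Orderly → ℬ s = 𝒜 (s.subst ts)

/-- `ℬ` is homogeneous for `X`. -/
def Homog (ℬ : Tm F → β) (X : Set β) : Prop :=
  OAUniv ℬ ⊆ X ∨ OAUniv ℬ ∩ X = ∅

/-- An orderly algebra is weakly Ramsey. -/
def WeaklyRamseyOA (𝒜 : Tm F → β) : Prop :=
  ∀ X ⊆ OAUniv 𝒜, ∃ ℬ, OAReduction ℬ 𝒜 ∧ Homog ℬ X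

/-- An orderly algebra is Ramsey. -/
def RamseyOA (𝒜 : Tm F → β) : Prop :=
  ∀ ℬ, OAReduction ℬ 𝒜 → ∀ X ⊆ OAUniv 𝒜, ∃ 𝒞, OAReduction 𝒞 ℬ ∧ Homog 𝒞 X

/-- The orderly algebra induced from the algebra `(A, I)` by the sequence `a`. -/
def inducedOA (I : ∀ n, F n → (Fin n → A) → A) (a : ℕ → A) : Tm F → A :=
  fun t => t.realize I a

/-- `[FR(c)]ⁿ_<` : increasing `n`-tuples of finite reductions of `c`. -/
def FRtuple (I : ∀ n, F n → (Fin n → A) → A) (n : ℕ) (c : ℕ → A) : Set (Fin n → A) :=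
  { x | ∃ t : Fin n → Tm F, OrdTuple t ∧ ∀ i, x i = (t i).realize I c }

/-- `‖𝒞‖ⁿ_<` for an orderly algebra `𝒞`. -/
def OATuple (n : ℕ) (𝒞 : Tm F → β) : Set (Fin n → β) :=
  { x | ∃ t : Fin n → Tm F, OrdTuple t ∧ ∀ i, x i = 𝒞 (t i) }

/-- The basic set `[n, a]` of the preorder with approximations `(ᵂA, ≤)`. -/
def Approx (I : ∀ n, F n → (Fin n → A) → A) (n : ℕ) (a : ℕ → A) : Set (ℕ → A) :=
  { b | SeqReduction I b a ∧ ∀ i < n, b i = a i }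

/-- The natural topology on `ᵂA`, generated by the sets `[n, a]`. -/
def natTop (I : ∀ n, F n → (Fin n → A) → A) : TopologicalSpace (ℕ → A) :=
  TopologicalSpace.generateFrom { S | ∃ n a, S = Approx I n a }

/-- A subset `X ⊆ ᵂA` is Ramsey. -/
def RamseySet (I : ∀ n, F n → (Fin n → A) → A) (X : Set (ℕ → A)) : Prop :=
  ∀ (n : ℕ) (a : ℕ → A), ∃ b ∈ Approx I n a,
    Approx I n b ⊆ X ∨ Approx I n b ∩ X = ∅

/-- `X` has the property of Baire in the natural topology:
its symmetric difference with some open set is meager. -/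
def HasBaireProperty (I : ∀ n, F n → (Fin n → A) → A) (X : Set (ℕ → A)) : Prop :=
  ∃ U : Set (ℕ → A), @IsOpen _ (natTop I) U ∧ @IsMeagre _ (natTop I) (symmDiff X U)

end General

/-- The language with a single binary function symbol. -/
inductive BinF : ℕ → Type
  | f : BinF 2

/-- Application of the binary function symbol: the term `f s t`. -/
def fapp (s t : Tm BinF) : Tm BinF := .func BinF.f ![s, t]

/-- The interpretation of the single binary function symbol by a binary
operation `g` on `A`. -/
def binI {A : Type v} (g : A → A → A) : ∀ n, BinF n → (Fin n → A) → A
  | _, BinF.f, args => g (args 0) (args 1)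

/-- The pair `(tˣ, tʸ)`: `(vᵢˣ, vᵢʸ) = (v_{2i}, v_{2i+1})` and
`((f s t)ˣ, (f s t)ʸ) = (f sˣ sʸ, f tˣ tʸ)`. -/
def xyPair : Tm BinF → Tm BinF × Tm BinF
  | .var i => (.var (2 * i), .var (2 * i + 1))
  | .func BinF.f ts =>
      (fapp (xyPair (ts 0)).1 (xyPair (ts 0)).2, fapp (xyPair (ts 1)).1 (xyPair (ts 1)).2)

/-- The orderly algebra `♯𝒜`, `♯𝒜(t) = (𝒜(tˣ), 𝒜(tʸ))`. -/
def sharpOA {β : Type w} (𝒜 : Tm BinF → β) : Tm BinF → β × β :=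
  fun t => (𝒜 (xyPair t).1, 𝒜 (xyPair t).2)

namespace List

variable {α β : Type*}

theorem findSome?_eq_of_head?_eq_some {g : α → Option β} {l : List α} {a : α}
    (ha : l.head? = some a) (hg : (g a).isSome) : l.findSome? g = g a := by
  cases l with
  | nil => simp at ha
  | cons b t =>
    obtain rfl : b = a := Option.some.inj ha
    exact findSome?_cons_of_isSome hg

theorem head?_flatMap_of_ne_nil {f : α → List β} (hf : ∀ a, f a ≠ []) {l : List α} {a : α}
    (ha : l.head? = some a) : (l.flatMap f).head? = (f a).head? := by
  rw [head?_flatMap, findSome?_eq_of_head?_eq_some ha (isSome_head?.2 (hf a))]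

theorem getLast?_flatMap_of_ne_nil {f : α → List β} (hf : ∀ a, f a ≠ []) {l : List α} {a : α}
    (ha : l.getLast? = some a) : (l.flatMap f).getLast? = (f a).getLast? := by
  rw [getLast?_flatMap, findSome?_eq_of_head?_eq_some (g := fun a => (f a).getLast?)
    (by rwa [head?_reverse]) (getLast?_isSome.2 (hf a))]

theorem IsChain.head?_le_getLast? [Preorder α] {l : List α} (h : l.IsChain (· < ·)) {x y : α}
    (hx : l.head? = some x) (hy : l.getLast? = some y) : x ≤ y := by
  have hne : l ≠ [] := by rintro rfl; simp at hx
  obtain rfl : l.head hne = x := by simpa [head?_eq_some_head hne] using hx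
  obtain rfl : l.getLast hne = y := by simpa [getLast?_eq_some_getLast hne] using hy
  simpa [Relation.reflTransGen_eq_self] using Relation.ReflTransGen.mono (fun _ _ => le_of_lt) _ _
    (relationReflTransGen_of_exists_isChain l h hne)

end List

namespace Tm

variable {F : ℕ → Type u} {A : Type v}

theorem TermLT.trans {s t u : Tm F} (hst : TermLT s t) (ht : t.Orderly) (htu : TermLT t u) :
    TermLT s u := by
  obtain ⟨i, j, hi, hj, hij⟩ := hst
  obtain ⟨j', k, hj', hk, hjk⟩ := htu
  exact ⟨i, k, hi, hk, (hij.trans_le (List.IsChain.head?_le_getLast? ht hj hj')).trans hjk⟩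

theorem Admissible.termLT_of_lt {σ : ℕ → Tm F} (hσ : Admissible σ) {i j : ℕ} (hij : i < j) :
    TermLT (σ i) (σ j) := by
  induction j, hij using Nat.le_induction with
  | base => exact hσ.2 i
  | succ j _ ih => exact ih.trans (hσ.1 j) (hσ.2 j)

theorem Admissible.varList_ne_nil {σ : ℕ → Tm F} (hσ : Admissible σ) (i : ℕ) :
    (σ i).varList ≠ [] := by
  obtain ⟨_, _, hlast, _⟩ := hσ.2 i
  rintro hnil
  simp [hnil] at hlast

theorem varList_subst (σ : ℕ → Tm F) (s : Tm F) :
    (s.subst σ).varList = s.varList.flatMap fun j => (σ j).varList := by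
  induction s with
  | var i => simp [subst, varList]
  | func f ts ih =>
    simp only [subst, varList, List.flatMap_assoc]
    exact List.flatMap_congr fun i _ => ih i

theorem realize_subst (I : ∀ n, F n → (Fin n → A) → A) (a : ℕ → A) (σ : ℕ → Tm F)
    (s : Tm F) : (s.subst σ).realize I a = s.realize I fun j => (σ j).realize I a := by
  induction s with
  | var i => rfl
  | func f ts ih => simp only [subst, realize, ih]

theorem Orderly.subst {σ : ℕ → Tm F} (hσ : Admissible σ) {s : Tm F} (hs : s.Orderly) :
    (s.subst σ).Orderly := by
  change List.IsChain _ _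
  rw [varList_subst, List.flatMap_def,
    List.isChain_flatten (by simpa using fun j _ => hσ.varList_ne_nil j),
    List.isChain_map]
  refine ⟨List.forall_mem_map.2 fun j _ => hσ.1 j, hs.imp fun {p q} hpq => ?_⟩
  obtain ⟨x, y, hx, hy, hxy⟩ := hσ.termLT_of_lt hpq
  simpa [hx, hy] using hxy

theorem TermLT.subst {σ : ℕ → Tm F} (hσ : Admissible σ) {s t : Tm F} (h : TermLT s t) :
    TermLT (s.subst σ) (t.subst σ) := by
  obtain ⟨i, j, hi, hj, hij⟩ := h
  obtain ⟨x, y, hx, hy, hxy⟩ := hσ.termLT_of_lt hij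
  refine ⟨x, y, ?_, ?_, hxy⟩
  · rw [varList_subst, List.getLast?_flatMap_of_ne_nil hσ.varList_ne_nil hi, hx]
  · rw [varList_subst, List.head?_flatMap_of_ne_nil hσ.varList_ne_nil hj, hy]

theorem Admissible.subst {σ τ : ℕ → Tm F} (hσ : Admissible σ) (hτ : Admissible τ) :
    Admissible fun i => (τ i).subst σ :=
  ⟨fun i => (hτ.1 i).subst hσ, fun i => (hτ.2 i).subst hσ⟩

theorem orderly_var (i : ℕ) : (var i : Tm F).Orderly := by
  exact List.isChain_singleton i

theorem admissible_var : Admissible (var : ℕ → Tm F) :=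
  ⟨orderly_var, fun i => ⟨i, i + 1, by simp [varList]⟩⟩

end Tm

section Reduction

variable {F : ℕ → Type u} {A : Type v} {I : ∀ n, F n → (Fin n → A) → A}

theorem SeqReduction.refl (a : ℕ → A) : SeqReduction I a a :=
  ⟨Tm.var, Tm.admissible_var, fun _ => rfl⟩

theorem SeqReduction.trans {a b c : ℕ → A} (hcb : SeqReduction I c b)
    (hba : SeqReduction I b a) : SeqReduction I c a := by
  obtain ⟨τ, hτ, hc⟩ := hcb
  obtain ⟨σ, hσ, hb⟩ := hba
  obtain rfl : b = fun j => (σ j).realize I a := funext hb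
  exact ⟨_, hσ.subst hτ, fun i => (hc i).trans (Tm.realize_subst I a σ (τ i)).symm⟩

theorem FR_subset_of_seqReduction {a b : ℕ → A} (hba : SeqReduction I b a) :
    FR I b ⊆ FR I a := by
  rintro _ ⟨t, ht, rfl⟩
  obtain ⟨σ, hσ, hb⟩ := hba
  obtain rfl : b = fun j => (σ j).realize I a := funext hb
  exact ⟨t.subst σ, ht.subst hσ, (Tm.realize_subst I a σ t).symm⟩

theorem apply_zero_mem_FR (a : ℕ → A) : a 0 ∈ FR I a :=
  ⟨.var 0, Tm.orderly_var 0, rfl⟩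

end Reduction

/-- Among the reductions of `a`, take one, `b`, with `FR b` of least size. Homogeneity for `{b 0}`
yields `c ≤ b` with either `FR c = {b 0}`, or `FR c ⊆ FR b \ {b 0}`, contradicting minimality. -/
theorem exists_FR_eq_singleton_of_ramseyBelow {F : ℕ → Type u} {A : Type v}
    {I : ∀ n, F n → (Fin n → A) → A} {a : ℕ → A} (hfin : (FR I a).Finite)
    (hR : RamseyBelow I a) : ∃ b, SeqReduction I b a ∧ ∃ x : A, FR I b = {x} := by
  classical
  have hex : ∃ n, ∃ b, SeqReduction I b a ∧ (FR I b).ncard = n := ⟨_, a, .refl a, rfl⟩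
  obtain ⟨b, hba, hb⟩ := Nat.find_spec hex
  obtain ⟨c, hcb, hc | hc⟩ := hR b hba {b 0}
  · exact ⟨c, hcb.trans hba, b 0,
      (Set.nonempty_of_mem (apply_zero_mem_FR c)).subset_singleton_iff.1 hc⟩
  · have hcb_ssubset : FR I c ⊂ FR I b :=
      ⟨FR_subset_of_seqReduction hcb, fun h =>
        Set.eq_empty_iff_forall_notMem.1 hc (b 0) ⟨h (apply_zero_mem_FR b), rfl⟩⟩
    have hlt := Set.ncard_lt_ncard hcb_ssubset (hfin.subset (FR_subset_of_seqReduction hba))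
    exact (Nat.find_min hex (hb ▸ hlt) ⟨c, hcb.trans hba, rfl⟩).elim

theorem finite_ramsey_degenerate_general {F : ℕ → Type u} {A : Type v}
    [Finite A] (I : ∀ n, F n → (Fin n → A) → A) (hR : RamseyAlg I)
    (a : ℕ → A) :
    ∃ b, SeqReduction I b a ∧ ∃ x : A, FR I b = {x} :=
  exists_FR_eq_singleton_of_ramseyBelow (Set.toFinite _) fun b _ => hR b

/-- Every finite Ramsey algebra is a degenerate Ramsey
algebra: every sequence has a reduction whose set of finite reductions is a
singleton. -/
theorem finite_ramsey_degenerate {F : ℕ → Type u} [IsEmpty (F 0)] {A : Type v}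
    [Finite A] (I : ∀ n, F n → (Fin n → A) → A) (hR : RamseyAlg I)
    (a : ℕ → A) :
    ∃ b, SeqReduction I b a ∧ ∃ x : A, FR I b = {x} :=
  finite_ramsey_degenerate_general I hR a
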